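/- arXiv:2105.05052 — 4 statements merged into one kernel-verified Lean document; each statement's English description precedes it below -/
import Mathlib

section
/- Let L : ℝ^d → ℝ be m-strongly convex, let u, w ∈ ℝ^d, and let M = diag(M₁,...,M_d) be a random diagonal matrix with independent entries satisfying E[Mᵢ] = μ > 0 and Var(Mᵢ) = σ². Define Φ(w; u, M) = μ⁻¹(Mw + (I − M)u − (1 − μ)u). Then E[L(Φ(w; u, M))] ≥ L(w) + (mσ²)/(2μ²) · ‖w − u‖₂². -/
/-!
Strong convexity at the mean `x` of a random point `Y` gives
`L Y ≥ L x + ⟨g x, Y - x⟩ + (m/2)‖Y - x‖²`; taking expectations kills the linear term, so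
`E[L Y] ≥ L x + (m/2) ∑ᵢ Var(Yᵢ)`. The mixout mixture is unbiased,
`Φᵢ - wᵢ = μ⁻¹ (Mᵢ - μ)(wᵢ - uᵢ)`, so it has mean `w` and `Var(Φᵢ) = σ² (wᵢ - uᵢ)² / μ²`.
-/

open MeasureTheory Finset

section StrongConvexity

variable {Ω : Type*} [MeasurableSpace Ω] (P : Measure Ω) [IsProbabilityMeasure P] {d : ℕ}

theorem integral_sub_const_eq_zero_of_integral_eq {X : Ω → ℝ} {a : ℝ}
    (hX : Integrable X P) (hmean : ∫ ω, X ω ∂P = a) : ∫ ω, (X ω - a) ∂P = 0 := by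
  rw [integral_sub hX (integrable_const a), hmean, integral_const, probReal_univ, one_smul,
    sub_self]

theorem integrable_sub_const_sq {X : Ω → ℝ} (a : ℝ) (hX : Integrable X P)
    (hX2 : Integrable (fun ω => X ω ^ 2) P) : Integrable (fun ω => (X ω - a) ^ 2) P := by
  have hexpand : Integrable (fun ω => X ω ^ 2 - 2 * a * X ω + a ^ 2) P :=
    (hX2.sub (hX.const_mul (2 * a))).add (integrable_const _)
  exact hexpand.congr (Filter.Eventually.of_forall fun ω => by ring)

theorem add_sum_variance_le_integral_of_strongConvex
    (L : (Fin d → ℝ) → ℝ) (g : (Fin d → ℝ) → (Fin d → ℝ)) (m : ℝ)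
    (hsc : ∀ x y : Fin d → ℝ,
      L y ≥ L x + (∑ i, g x i * (y i - x i)) + m / 2 * ∑ i, (y i - x i) ^ 2)
    (Y : Ω → Fin d → ℝ) (x : Fin d → ℝ)
    (hY : ∀ i, Integrable (fun ω => Y ω i) P)
    (hY2 : ∀ i, Integrable (fun ω => (Y ω i - x i) ^ 2) P)
    (hmean : ∀ i, ∫ ω, Y ω i ∂P = x i)
    (hLY : Integrable (fun ω => L (Y ω)) P) :
    L x + m / 2 * ∑ i, ∫ ω, (Y ω i - x i) ^ 2 ∂P ≤ ∫ ω, L (Y ω) ∂P := by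
  have hlin : ∀ i, Integrable (fun ω => g x i * (Y ω i - x i)) P := fun i =>
    ((hY i).sub (integrable_const _)).const_mul _
  have hlin_sum : Integrable (fun ω => ∑ i, g x i * (Y ω i - x i)) P :=
    integrable_finsetSum _ fun i _ => hlin i
  have hquad_sum : Integrable (fun ω => m / 2 * ∑ i, (Y ω i - x i) ^ 2) P :=
    (integrable_finsetSum _ fun i _ => hY2 i).const_mul _
  have hlin_zero : ∀ i, ∫ ω, g x i * (Y ω i - x i) ∂P = 0 := fun i => by
    rw [integral_const_mul, integral_sub_const_eq_zero_of_integral_eq P (hY i) (hmean i),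
      mul_zero]
  calc L x + m / 2 * ∑ i, ∫ ω, (Y ω i - x i) ^ 2 ∂P
      = ∫ ω, (L x + (∑ i, g x i * (Y ω i - x i)) + m / 2 * ∑ i, (Y ω i - x i) ^ 2) ∂P := by
        rw [integral_add ((integrable_const _).fun_add hlin_sum) hquad_sum,
          integral_add (integrable_const _) hlin_sum, integral_const, probReal_univ, one_smul,
          integral_finsetSum _ fun i _ => hlin i, integral_const_mul,
          integral_finsetSum _ fun i _ => hY2 i]
        simp only [hlin_zero, sum_const_zero, add_zero]
    _ ≤ ∫ ω, L (Y ω) ∂P :=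
        integral_mono (((integrable_const _).fun_add hlin_sum).fun_add hquad_sum) hLY
          fun ω => hsc x (Y ω)

end StrongConvexity

theorem mixout_sub_eq {μ a w u : ℝ} (hμ : μ ≠ 0) :
    μ⁻¹ * (a * w + (1 - a) * u - (1 - μ) * u) - w = μ⁻¹ * (w - u) * (a - μ) := by
  field_simp
  ring

theorem mixout_strongly_convex_lower_bound_general
    {Ω : Type*} [MeasureSpace Ω] [IsProbabilityMeasure (volume : Measure Ω)]
    {d : ℕ} (L : (Fin d → ℝ) → ℝ) (g : (Fin d → ℝ) → (Fin d → ℝ)) (m : ℝ)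
    (hsc : ∀ x y : Fin d → ℝ,
      L y ≥ L x + (∑ i, g x i * (y i - x i)) + m / 2 * ∑ i, (y i - x i) ^ 2)
    (M : Ω → Fin d → ℝ) (w u : Fin d → ℝ) (μ σ : ℝ) (hμ : 0 < μ)
    (hint : ∀ i, Integrable (fun ω => M ω i))
    (hint2 : ∀ i, Integrable (fun ω => (M ω i) ^ 2))
    (hmean : ∀ i, ∫ ω, M ω i = μ)
    (hvar : ∀ i, ∫ ω, (M ω i - μ) ^ 2 = σ ^ 2)
    (Φ : Ω → Fin d → ℝ)
    (hΦ : ∀ ω i, Φ ω i = μ⁻¹ * (M ω i * w i + (1 - M ω i) * u i - (1 - μ) * u i))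
    (hLint : Integrable (fun ω => L (Φ ω))) :
    (∫ ω, L (Φ ω)) ≥ L w + m * σ ^ 2 / (2 * μ ^ 2) * ∑ i, (w i - u i) ^ 2 := by
  have hΦw : ∀ i, (fun ω => Φ ω i - w i) = fun ω => μ⁻¹ * (w i - u i) * (M ω i - μ) :=
    fun i => funext fun ω => by rw [hΦ, mixout_sub_eq hμ.ne']
  have hdev : ∀ i, Integrable (fun ω => Φ ω i - w i) := fun i => by
    rw [hΦw]
    exact ((hint i).sub (integrable_const μ)).const_mul _
  have hΦ_int : ∀ i, Integrable (fun ω => Φ ω i) := fun i =>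
    ((hdev i).add (integrable_const (w i))).congr
      (Filter.Eventually.of_forall fun ω => sub_add_cancel _ _)
  have hΦ_mean : ∀ i, ∫ ω, Φ ω i = w i := fun i => by
    have hcentered : ∫ ω, (Φ ω i - w i) = 0 := by
      rw [hΦw, integral_const_mul,
        integral_sub_const_eq_zero_of_integral_eq _ (hint i) (hmean i), mul_zero]
    rwa [integral_sub (hΦ_int i) (integrable_const _), integral_const, probReal_univ,
      one_smul, sub_eq_zero] at hcentered
  have hsq : ∀ i, (fun ω => (Φ ω i - w i) ^ 2)
      = fun ω => (μ⁻¹ * (w i - u i)) ^ 2 * (M ω i - μ) ^ 2 := fun i => funext fun ω => by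
    rw [show Φ ω i - w i = _ from congrFun (hΦw i) ω, mul_pow]
  have hΦ_var : ∀ i, ∫ ω, (Φ ω i - w i) ^ 2 = (μ⁻¹ * (w i - u i)) ^ 2 * σ ^ 2 := fun i => by
    rw [hsq, integral_const_mul, hvar]
  have hΦ_sq : ∀ i, Integrable (fun ω => (Φ ω i - w i) ^ 2) := fun i => by
    rw [hsq]
    exact (integrable_sub_const_sq _ μ (hint i) (hint2 i)).const_mul _
  have key := add_sum_variance_le_integral_of_strongConvex volume L g m hsc Φ w hΦ_int hΦ_sq
    hΦ_mean hLint
  simp only [hΦ_var] at key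
  convert key using 2
  rw [mul_sum, mul_sum]
  refine sum_congr rfl fun i _ => ?_
  field_simp

/-- paper Theorem 1: for an `m`-strongly convex loss `L` (witnessed by a
gradient map `g` via the first-order strong convexity inequality), and a random mask with
`E[Mᵢ] = μ > 0` and `Var(Mᵢ) = σ²`, the mixout mixture
`Φ(w; u, M)ᵢ = μ⁻¹(Mᵢ wᵢ + (1 − Mᵢ) uᵢ − (1 − μ) uᵢ)` satisfies
`E[L(Φ(w; u, M))] ≥ L(w) + (mσ²)/(2μ²)‖w − u‖₂²`. -/
theorem mixout_strongly_convex_lower_bound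
    {Ω : Type*} [MeasureSpace Ω] [IsProbabilityMeasure (volume : Measure Ω)]
    {d : ℕ} (L : (Fin d → ℝ) → ℝ) (g : (Fin d → ℝ) → (Fin d → ℝ)) (m : ℝ) (hm : 0 < m)
    (hsc : ∀ x y : Fin d → ℝ,
      L y ≥ L x + (∑ i, g x i * (y i - x i)) + m / 2 * ∑ i, (y i - x i) ^ 2)
    (M : Ω → Fin d → ℝ) (w u : Fin d → ℝ) (μ σ : ℝ) (hμ : 0 < μ)
    (hMmeas : ∀ i, Measurable fun ω => M ω i)
    (hint : ∀ i, Integrable (fun ω => M ω i))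
    (hint2 : ∀ i, Integrable (fun ω => (M ω i) ^ 2))
    (hmean : ∀ i, ∫ ω, M ω i = μ)
    (hvar : ∀ i, ∫ ω, (M ω i - μ) ^ 2 = σ ^ 2)
    (Φ : Ω → Fin d → ℝ)
    (hΦ : ∀ ω i, Φ ω i = μ⁻¹ * (M ω i * w i + (1 - M ω i) * u i - (1 - μ) * u i))
    (hLint : Integrable (fun ω => L (Φ ω))) :
    (∫ ω, L (Φ ω)) ≥ L w + m * σ ^ 2 / (2 * μ ^ 2) * ∑ i, (w i - u i) ^ 2 :=
  mixout_strongly_convex_lower_bound_general L g m hsc M w u μ σ hμ hint hint2 hmean hvar Φ hΦ hLint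
end

section
/- Let M = diag(M₁,...,M_d) be random with independent entries, E[Mᵢ] = μ > 0, Var(Mᵢ) = σ², and let Φ(w; u, M) = μ⁻¹(Mw + (I − M)u − (1 − μ)u). For the quadratic loss L(θ) = (1/2)‖Aθ − b‖² with A having columns aᵢ of norm at most √c, one has E[L(Φ(w; u, M))] = L(w) + (σ²)/(2μ²) · Σᵢ ‖aᵢ‖² (wᵢ − uᵢ)², and in particular E[L(Φ(w; u, M))] ≤ L(w) + (cσ²)/(2μ²)‖w − u‖². -/
open MeasureTheory ProbabilityTheory Finset

/-!
Each mixout coordinate `Φᵢ = (wᵢ - uᵢ) / μ * Mᵢ + uᵢ` is an affine image of `Mᵢ`, so the `Φᵢ` are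
independent with mean `wᵢ` and variance `((wᵢ - uᵢ) / μ)² σ²`. The `j`-th residual
`∑ᵢ Aⱼᵢ Φᵢ - bⱼ` therefore has mean `∑ᵢ Aⱼᵢ wᵢ - bⱼ` and, by independence, variance
`∑ᵢ Aⱼᵢ² Var Φᵢ`; summing `E[X²] = Var X + (E X)²` over `j` gives the identity, and `‖aᵢ‖² ≤ c`
gives the bound.
-/

section QuadraticLoss

variable {Ω ι κ : Type*} [MeasurableSpace Ω] {P : Measure Ω} [IsProbabilityMeasure P]
  [Fintype ι] {X : ι → Ω → ℝ}

lemma integral_sq_eq_variance_add_sq {Y : Ω → ℝ} (hY : MemLp Y 2 P) :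
    ∫ ω, Y ω ^ 2 ∂P = Var[Y; P] + (∫ ω, Y ω ∂P) ^ 2 := by
  rw [variance_eq_sub hY]
  simp only [Pi.pow_apply]
  ring

lemma variance_sum_mul_sub_const (hX : ∀ i, MemLp (X i) 2 P)
    (hindep : Pairwise fun i j => IndepFun (X i) (X j) P) (a : ι → ℝ) (c : ℝ) :
    Var[fun ω => ∑ i, a i * X i ω - c; P] = ∑ i, a i ^ 2 * Var[X i; P] := by
  have haX : ∀ i, MemLp (fun ω => a i * X i ω) 2 P := fun i => (hX i).const_mul (a i)
  have hsum : MemLp (∑ i, fun ω => a i * X i ω) 2 P := memLp_finsetSum' _ fun i _ => haX i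
  calc Var[fun ω => ∑ i, a i * X i ω - c; P]
      = Var[fun ω => (∑ i, fun ω => a i * X i ω) ω - c; P] := by simp only [Finset.sum_apply]
    _ = ∑ i, Var[fun ω => a i * X i ω; P] := by
      rw [variance_sub_const hsum.aestronglyMeasurable, IndepFun.variance_sum fun i _ => haX i]
      intro i _ j _ hij
      exact (hindep hij).comp (measurable_const_mul (a i)) (measurable_const_mul (a j))
    _ = ∑ i, a i ^ 2 * Var[X i; P] := by simp only [variance_const_mul]

lemma integral_sq_sum_mul_sub_const (hX : ∀ i, MemLp (X i) 2 P)
    (hindep : Pairwise fun i j => IndepFun (X i) (X j) P) (a : ι → ℝ) (c : ℝ) :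
    ∫ ω, (∑ i, a i * X i ω - c) ^ 2 ∂P
      = (∑ i, a i * ∫ ω, X i ω ∂P - c) ^ 2 + ∑ i, a i ^ 2 * Var[X i; P] := by
  have hY : MemLp (fun ω => ∑ i, a i * X i ω - c) 2 P :=
    (memLp_finsetSum univ fun i _ => (hX i).const_mul (a i)).sub (memLp_const c)
  have hint : ∀ i, Integrable (fun ω => a i * X i ω) P :=
    fun i => ((hX i).integrable one_le_two).const_mul (a i)
  rw [integral_sq_eq_variance_add_sq hY, variance_sum_mul_sub_const hX hindep,
    integral_sub (integrable_finsetSum _ fun i _ => hint i) (integrable_const c),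
    integral_finsetSum _ fun i _ => hint i]
  simp only [integral_const_mul, integral_const, probReal_univ, smul_eq_mul, one_mul]
  ring

lemma integral_quadratic_loss [Fintype κ] (hX : ∀ i, MemLp (X i) 2 P)
    (hindep : Pairwise fun i j => IndepFun (X i) (X j) P) (A : Matrix κ ι ℝ) (b : κ → ℝ) :
    ∫ ω, 1 / 2 * ∑ j, (∑ i, A j i * X i ω - b j) ^ 2 ∂P
      = 1 / 2 * ∑ j, (∑ i, A j i * ∫ ω, X i ω ∂P - b j) ^ 2
        + 1 / 2 * ∑ i, (∑ j, A j i ^ 2) * Var[X i; P] := by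
  have hsq : ∀ j, Integrable (fun ω => (∑ i, A j i * X i ω - b j) ^ 2) P := fun j =>
    ((memLp_finsetSum univ fun i _ => (hX i).const_mul (A j i)).sub
      (memLp_const (b j))).integrable_sq
  rw [integral_const_mul, integral_finsetSum _ fun j _ => hsq j]
  simp only [integral_sq_sum_mul_sub_const hX hindep, sum_add_distrib, mul_add, sum_mul]
  rw [sum_comm (γ := ι)]

end QuadraticLoss

section Mixout

variable {Ω ι : Type*} [MeasurableSpace Ω] {P : Measure Ω} {M : Ω → ι → ℝ} {μ : ℝ}
  {w u : ι → ℝ}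

noncomputable def mixout (μ : ℝ) (w u m : ι → ℝ) (i : ι) : ℝ :=
  μ⁻¹ * (m i * w i + (1 - m i) * u i - (1 - μ) * u i)

lemma mixout_eq_affine (hμ : μ ≠ 0) (m : ι → ℝ) (i : ι) :
    mixout μ w u m i = (w i - u i) / μ * m i + u i := by
  unfold mixout
  field_simp
  ring

lemma integral_mixout [IsProbabilityMeasure P] (hμ : μ ≠ 0) {i : ι}
    (hM : Integrable (fun ω => M ω i) P) (hmean : ∫ ω, M ω i ∂P = μ) :
    ∫ ω, mixout μ w u (M ω) i ∂P = w i := by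
  simp only [mixout_eq_affine hμ]
  rw [integral_add (hM.const_mul _) (integrable_const _), integral_const_mul, hmean]
  simp only [integral_const, probReal_univ, smul_eq_mul, one_mul]
  field_simp
  ring

lemma variance_mixout [IsProbabilityMeasure P] (hμ : μ ≠ 0) {i : ι}
    (hM : AEStronglyMeasurable (fun ω => M ω i) P) :
    Var[fun ω => mixout μ w u (M ω) i; P]
      = ((w i - u i) / μ) ^ 2 * Var[fun ω => M ω i; P] := by
  simp only [mixout_eq_affine hμ]
  rw [variance_add_const (hM.const_mul _), variance_const_mul]

lemma memLp_mixout [IsProbabilityMeasure P] (hμ : μ ≠ 0) {i : ι}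
    (hM : MemLp (fun ω => M ω i) 2 P) :
    MemLp (fun ω => mixout μ w u (M ω) i) 2 P := by
  simp only [mixout_eq_affine hμ]
  exact (hM.const_mul _).add (memLp_const _)

lemma indepFun_mixout (hμ : μ ≠ 0) (hindep : iIndepFun (fun i ω => M ω i) P) :
    Pairwise fun i j =>
      IndepFun (fun ω => mixout μ w u (M ω) i) (fun ω => mixout μ w u (M ω) j) P := by
  intro i j hij
  simp only [mixout_eq_affine hμ]
  exact (hindep.indepFun hij).comp (measurable_id.const_mul _ |>.add_const _)
    (measurable_id.const_mul _ |>.add_const _)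

end Mixout

theorem mixout_quadratic_loss_general
    {Ω : Type*} [MeasureSpace Ω] [IsProbabilityMeasure (volume : Measure Ω)]
    {n d : ℕ} (A : Matrix (Fin n) (Fin d) ℝ) (b : Fin n → ℝ) (c : ℝ)
    (hc : ∀ i, (∑ j, (A j i) ^ 2) ≤ c)
    (L : (Fin d → ℝ) → ℝ)
    (hL : ∀ θ, L θ = (1 / 2) * ∑ j, ((∑ i, A j i * θ i) - b j) ^ 2)
    (M : Ω → Fin d → ℝ) (w u : Fin d → ℝ) (μ σ : ℝ) (hμ : 0 < μ)
    (hMmeas : ∀ i, Measurable fun ω => M ω i)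
    (hindep : iIndepFun (fun i ω => M ω i) volume)
    (hint2 : ∀ i, Integrable (fun ω => (M ω i) ^ 2))
    (hmean : ∀ i, ∫ ω, M ω i = μ)
    (hvar : ∀ i, ∫ ω, (M ω i - μ) ^ 2 = σ ^ 2)
    (Φ : Ω → Fin d → ℝ)
    (hΦ : ∀ ω i, Φ ω i = μ⁻¹ * (M ω i * w i + (1 - M ω i) * u i - (1 - μ) * u i)) :
    (∫ ω, L (Φ ω)) =
        L w + σ ^ 2 / (2 * μ ^ 2) * ∑ i, (∑ j, (A j i) ^ 2) * (w i - u i) ^ 2 ∧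
      (∫ ω, L (Φ ω)) ≤ L w + c * σ ^ 2 / (2 * μ ^ 2) * ∑ i, (w i - u i) ^ 2 := by
  have hμ0 : μ ≠ 0 := hμ.ne'
  have hΦ' : Φ = fun ω => mixout μ w u (M ω) := funext fun ω => funext (hΦ ω)
  have hM : ∀ i, MemLp (fun ω => M ω i) 2 :=
    fun i => (memLp_two_iff_integrable_sq (hMmeas i).aestronglyMeasurable).2 (hint2 i)
  have hvarM : ∀ i, Var[fun ω => M ω i; volume] = σ ^ 2 := fun i => by
    rw [variance_eq_integral (hMmeas i).aemeasurable, hmean, hvar]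
  have hloss : ∫ ω, L (Φ ω)
      = L w + σ ^ 2 / (2 * μ ^ 2) * ∑ i, (∑ j, (A j i) ^ 2) * (w i - u i) ^ 2 := by
    simp only [hL, hΦ']
    rw [integral_quadratic_loss (X := fun i ω => mixout μ w u (M ω) i)
      (fun i => memLp_mixout hμ0 (hM i)) (indepFun_mixout hμ0 hindep)]
    simp only [integral_mixout hμ0 ((hM _).integrable one_le_two) (hmean _),
      variance_mixout hμ0 (hMmeas _).aestronglyMeasurable, hvarM, mul_sum]
    congr 1
    refine sum_congr rfl fun i _ => ?_
    field_simp
  refine ⟨hloss, hloss ▸ ?_⟩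
  calc L w + σ ^ 2 / (2 * μ ^ 2) * ∑ i, (∑ j, (A j i) ^ 2) * (w i - u i) ^ 2
      ≤ L w + σ ^ 2 / (2 * μ ^ 2) * ∑ i, c * (w i - u i) ^ 2 := by gcongr with i; exact hc i
    _ = L w + c * σ ^ 2 / (2 * μ ^ 2) * ∑ i, (w i - u i) ^ 2 := by rw [← mul_sum]; ring

/-- for the quadratic loss `L(θ) = (1/2)‖Aθ − b‖²` whose columns `aᵢ` satisfy
`‖aᵢ‖² ≤ c`, and an independent random mask with `E[Mᵢ] = μ > 0`, `Var(Mᵢ) = σ²`, the mixout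
mixture satisfies
`E[L(Φ(w;u,M))] = L(w) + σ²/(2μ²) Σᵢ ‖aᵢ‖²(wᵢ − uᵢ)² ≤ L(w) + cσ²/(2μ²)‖w − u‖²`. -/
theorem mixout_quadratic_loss
    {Ω : Type*} [MeasureSpace Ω] [IsProbabilityMeasure (volume : Measure Ω)]
    {n d : ℕ} (A : Matrix (Fin n) (Fin d) ℝ) (b : Fin n → ℝ) (c : ℝ)
    (hc : ∀ i, (∑ j, (A j i) ^ 2) ≤ c)
    (L : (Fin d → ℝ) → ℝ)
    (hL : ∀ θ, L θ = (1 / 2) * ∑ j, ((∑ i, A j i * θ i) - b j) ^ 2)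
    (M : Ω → Fin d → ℝ) (w u : Fin d → ℝ) (μ σ : ℝ) (hμ : 0 < μ)
    (hMmeas : ∀ i, Measurable fun ω => M ω i)
    (hindep : iIndepFun (fun i ω => M ω i) volume)
    (hint : ∀ i, Integrable (fun ω => M ω i))
    (hint2 : ∀ i, Integrable (fun ω => (M ω i) ^ 2))
    (hmean : ∀ i, ∫ ω, M ω i = μ)
    (hvar : ∀ i, ∫ ω, (M ω i - μ) ^ 2 = σ ^ 2)
    (Φ : Ω → Fin d → ℝ)
    (hΦ : ∀ ω i, Φ ω i = μ⁻¹ * (M ω i * w i + (1 - M ω i) * u i - (1 - μ) * u i)) :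
    (∫ ω, L (Φ ω)) =
        L w + σ ^ 2 / (2 * μ ^ 2) * ∑ i, (∑ j, (A j i) ^ 2) * (w i - u i) ^ 2 ∧
      (∫ ω, L (Φ ω)) ≤ L w + c * σ ^ 2 / (2 * μ ^ 2) * ∑ i, (w i - u i) ^ 2 :=
  mixout_quadratic_loss_general A b c hc L hL M w u μ σ hμ hMmeas hindep hint2 hmean hvar Φ hΦ
end

section
/- Let L(θ) = (1/2)‖Aθ − b‖² be quadratic with A^T A = cI for some c > 0 (so L is c-strongly convex), and let M, μ, σ², Φ be as in the mixout setting. Then E[L(Φ(w; u, M))] = L(w) + (cσ²)/(2μ²)‖w − u‖₂², i.e., the strong-convexity lower bound holds with equality for such quadratic losses. -/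
open MeasureTheory ProbabilityTheory Finset Matrix

/-!
Write `Φ = w + δ` with `δᵢ = μ⁻¹ (wᵢ - uᵢ)(Mᵢ - μ)`, a centred perturbation. Expanding the
quadratic loss around `w` gives `L(w + δ) = L(w) + ⟨Aᵀ(Aw - b), δ⟩ + (c/2)‖δ‖²`, because
`‖Aδ‖² = ⟨δ, AᵀA δ⟩ = c‖δ‖²`. Taking expectations, the linear term vanishes and
`E δᵢ² = μ⁻² (wᵢ - uᵢ)² σ²`.
-/

namespace Matrix

variable {m n R : Type*} [Fintype m] [Fintype n] [CommRing R]

theorem mulVec_dotProduct_mulVec_of_transpose_mul_self_eq_smul [DecidableEq n]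
    {A : Matrix m n R} {c : R} (hA : Aᵀ * A = c • 1) (x y : n → R) :
    A *ᵥ x ⬝ᵥ A *ᵥ y = c * (x ⬝ᵥ y) := by
  rw [dotProduct_comm, dotProduct_mulVec, ← mulVec_transpose, mulVec_mulVec, hA, smul_mulVec,
    one_mulVec, smul_dotProduct, dotProduct_comm, smul_eq_mul]

theorem mulVec_add_sub_dotProduct_self [DecidableEq n] {A : Matrix m n R} {c : R}
    (hA : Aᵀ * A = c • 1) (b : m → R) (x y : n → R) :
    (A *ᵥ (x + y) - b) ⬝ᵥ (A *ᵥ (x + y) - b) =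
      (A *ᵥ x - b) ⬝ᵥ (A *ᵥ x - b) + 2 * ((A *ᵥ x - b) ᵥ* A ⬝ᵥ y) + c * (y ⬝ᵥ y) := by
  have hsplit : A *ᵥ (x + y) - b = (A *ᵥ x - b) + A *ᵥ y := by
    rw [mulVec_add]; abel
  rw [hsplit, add_dotProduct, dotProduct_add, dotProduct_add,
    mulVec_dotProduct_mulVec_of_transpose_mul_self_eq_smul hA, dotProduct_comm (A *ᵥ y),
    dotProduct_mulVec]
  ring

end Matrix

section Moments

variable {Ω : Type*} [MeasurableSpace Ω] {P : Measure Ω} [IsProbabilityMeasure P]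

theorem integral_const_mul_sub_integral {X : Ω → ℝ} (hX : Integrable X P) (a : ℝ) :
    ∫ ω, a * (X ω - ∫ ω', X ω' ∂P) ∂P = 0 := by
  rw [integral_const_mul, integral_sub hX (integrable_const _), integral_const]
  simp

theorem MeasureTheory.Integrable.sub_const_sq {X : Ω → ℝ} (hX : Integrable X P)
    (hX2 : Integrable (fun ω => X ω ^ 2) P) (m : ℝ) :
    Integrable (fun ω => (X ω - m) ^ 2) P := by
  have hexp : (fun ω => (X ω - m) ^ 2) = fun ω => X ω ^ 2 - 2 * m * X ω + m ^ 2 := by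
    funext ω; ring
  rw [hexp]
  exact (hX2.sub (hX.const_mul _)).add (integrable_const _)

theorem integral_const_add_dotProduct_add_dotProduct_self {ι : Type*} [Fintype ι]
    {δ : Ω → ι → ℝ} (hδ : ∀ i, Integrable (fun ω => δ ω i) P)
    (hδ2 : ∀ i, Integrable (fun ω => δ ω i ^ 2) P) (a k : ℝ) (g : ι → ℝ) :
    ∫ ω, (a + g ⬝ᵥ δ ω + k * (δ ω ⬝ᵥ δ ω)) ∂P =
      a + g ⬝ᵥ (fun i => ∫ ω, δ ω i ∂P) + k * ∑ i, ∫ ω, δ ω i ^ 2 ∂P := by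
  have hlin : Integrable (fun ω => g ⬝ᵥ δ ω) P :=
    integrable_finsetSum _ fun i _ => (hδ i).const_mul (g i)
  have hquad : Integrable (fun ω => δ ω ⬝ᵥ δ ω) P :=
    integrable_finsetSum _ fun i _ => by simpa only [sq] using hδ2 i
  have haff : Integrable (fun ω => a + g ⬝ᵥ δ ω) P := (integrable_const a).add hlin
  rw [integral_add haff (hquad.const_mul k),
    integral_add (integrable_const a) hlin, integral_const, integral_const_mul]
  simp only [dotProduct, ← sq]
  rw [integral_finsetSum _ fun i _ => (hδ i).const_mul (g i),
    integral_finsetSum _ fun i _ => hδ2 i]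
  simp [integral_const_mul]

end Moments

theorem mixout_quadratic_equality_general
    {Ω : Type*} [MeasureSpace Ω] [IsProbabilityMeasure (volume : Measure Ω)]
    {n d : ℕ} (A : Matrix (Fin n) (Fin d) ℝ) (b : Fin n → ℝ) (c : ℝ)
    (hA : Aᵀ * A = c • (1 : Matrix (Fin d) (Fin d) ℝ))
    (L : (Fin d → ℝ) → ℝ)
    (hL : ∀ θ, L θ = (1 / 2) * ∑ j, ((∑ i, A j i * θ i) - b j) ^ 2)
    (M : Ω → Fin d → ℝ) (w u : Fin d → ℝ) (μ σ : ℝ) (hμ : 0 < μ)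
    (hint : ∀ i, Integrable (fun ω => M ω i))
    (hint2 : ∀ i, Integrable (fun ω => (M ω i) ^ 2))
    (hmean : ∀ i, ∫ ω, M ω i = μ)
    (hvar : ∀ i, ∫ ω, (M ω i - μ) ^ 2 = σ ^ 2)
    (Φ : Ω → Fin d → ℝ)
    (hΦ : ∀ ω i, Φ ω i = μ⁻¹ * (M ω i * w i + (1 - M ω i) * u i - (1 - μ) * u i)) :
    (∫ ω, L (Φ ω)) = L w + c * σ ^ 2 / (2 * μ ^ 2) * ∑ i, (w i - u i) ^ 2 := by
  have hL' : ∀ θ, L θ = 1 / 2 * ((A *ᵥ θ - b) ⬝ᵥ (A *ᵥ θ - b)) := fun θ => by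
    simp only [hL, dotProduct, ← sq]; rfl
  set δ : Ω → Fin d → ℝ := fun ω i => μ⁻¹ * (w i - u i) * (M ω i - μ)
  have hΦδ : ∀ ω, Φ ω = w + δ ω := fun ω => funext fun i => by
    rw [hΦ, Pi.add_apply]; simp only [δ]; field_simp; ring
  have hδ : ∀ i, Integrable (fun ω => δ ω i) := fun i =>
    ((hint i).sub (integrable_const μ)).const_mul _
  have hδ2 : ∀ i, Integrable (fun ω => δ ω i ^ 2) := fun i => by
    simpa only [δ, mul_pow] using ((hint i).sub_const_sq (hint2 i) μ).const_mul _
  have hδ_mean : ∀ i, ∫ ω, δ ω i = 0 := fun i => by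
    simpa only [hmean] using integral_const_mul_sub_integral (hint i) (μ⁻¹ * (w i - u i))
  have hδ_sq : ∀ i, ∫ ω, δ ω i ^ 2 = (μ⁻¹ * (w i - u i)) ^ 2 * σ ^ 2 := fun i => by
    simp only [δ, mul_pow, integral_const_mul, hvar]
  have hexpand : ∀ ω, L (Φ ω) =
      L w + ((A *ᵥ w - b) ᵥ* A) ⬝ᵥ δ ω + c / 2 * (δ ω ⬝ᵥ δ ω) := fun ω => by
    rw [hΦδ, hL', hL', mulVec_add_sub_dotProduct_self hA]; ring
  simp_rw [hexpand]
  rw [integral_const_add_dotProduct_add_dotProduct_self hδ hδ2]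
  have hzero : (fun i => ∫ ω, δ ω i) = 0 := funext hδ_mean
  rw [hzero, dotProduct_zero, add_zero, Finset.mul_sum, Finset.mul_sum]
  congr 1
  refine Finset.sum_congr rfl fun i _ => ?_
  rw [hδ_sq]
  field_simp

/-- for a quadratic loss `L(θ) = (1/2)‖Aθ − b‖²` with `AᵀA = cI` (`c > 0`),
the mixout strong-convexity bound holds with equality:
`E[L(Φ(w; u, M))] = L(w) + cσ²/(2μ²)‖w − u‖₂²`. -/
theorem mixout_quadratic_equality
    {Ω : Type*} [MeasureSpace Ω] [IsProbabilityMeasure (volume : Measure Ω)]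
    {n d : ℕ} (A : Matrix (Fin n) (Fin d) ℝ) (b : Fin n → ℝ) (c : ℝ) (hc : 0 < c)
    (hA : Aᵀ * A = c • (1 : Matrix (Fin d) (Fin d) ℝ))
    (L : (Fin d → ℝ) → ℝ)
    (hL : ∀ θ, L θ = (1 / 2) * ∑ j, ((∑ i, A j i * θ i) - b j) ^ 2)
    (M : Ω → Fin d → ℝ) (w u : Fin d → ℝ) (μ σ : ℝ) (hμ : 0 < μ)
    (hMmeas : ∀ i, Measurable fun ω => M ω i)
    (hindep : iIndepFun (fun i ω => M ω i) volume)
    (hint : ∀ i, Integrable (fun ω => M ω i))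
    (hint2 : ∀ i, Integrable (fun ω => (M ω i) ^ 2))
    (hmean : ∀ i, ∫ ω, M ω i = μ)
    (hvar : ∀ i, ∫ ω, (M ω i - μ) ^ 2 = σ ^ 2)
    (Φ : Ω → Fin d → ℝ)
    (hΦ : ∀ ω i, Φ ω i = μ⁻¹ * (M ω i * w i + (1 - M ω i) * u i - (1 - μ) * u i)) :
    (∫ ω, L (Φ ω)) = L w + c * σ ^ 2 / (2 * μ ^ 2) * ∑ i, (w i - u i) ^ 2 :=
  mixout_quadratic_equality_general A b c hA L hL M w u μ σ hμ hint hint2 hmean hvar Φ hΦ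
end

section
/- Let L(θ) = (1/2)‖Aθ − b‖₂² and let M be a random diagonal matrix with independent entries, E[Mᵢ] = μ > 0, Var(Mᵢ) = σ². With Φ(w;u,M) = μ⁻¹(Mw + (I−M)u − (1−μ)u), the variance decomposition E[L(Φ(w;u,M))] − L(w) = (1/2)·E[‖A(Φ(w;u,M) − w)‖₂²] holds, and E[‖A(Φ(w;u,M) − w)‖₂²] = (σ²/μ²) Σᵢ ‖aᵢ‖² (wᵢ − uᵢ)² where aᵢ are columns of A. -/
/-!
Coordinatewise, `Φ - w = μ⁻¹ (w - u) (M - μ)`, so each coordinate of `A (Φ - w)` is a linear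
combination of the centred, pairwise independent entries of `M`. It therefore has mean zero, which
kills the cross term when `L (Φ) = ½ ‖A (Φ - w) + (A w - b)‖²` is expanded, and its second moment
is its variance, which is additive over the independent summands.
-/

open MeasureTheory ProbabilityTheory Finset

section
variable {Ω ι : Type*} [MeasurableSpace Ω] {P : Measure Ω}

theorem variance_sum_const_mul_of_pairwise_indepFun {X : ι → Ω → ℝ} {s : Finset ι}
    (hX : ∀ i ∈ s, MemLp (X i) 2 P) (hindep : Set.Pairwise ↑s fun i j => IndepFun (X i) (X j) P)
    (a : ι → ℝ) :
    Var[fun ω => ∑ i ∈ s, a i * X i ω; P] = ∑ i ∈ s, a i ^ 2 * Var[X i; P] := by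
  have hsum := IndepFun.variance_sum (s := s) (X := fun i ω => a i * X i ω)
    (fun i hi => (hX i hi).const_mul (a i))
    (fun i hi j hj hij => (hindep hi hj hij).comp (measurable_const_mul (a i))
      (measurable_const_mul (a j)))
  simpa only [Finset.sum_fn, variance_const_mul] using hsum

variable [IsProbabilityMeasure P]

theorem memLp_sum_const_mul_sub_integral {X : ι → Ω → ℝ} {s : Finset ι}
    (hX : ∀ i ∈ s, MemLp (X i) 2 P) (a : ι → ℝ) :
    MemLp (fun ω => ∑ i ∈ s, a i * (X i ω - P[X i])) 2 P :=
  memLp_finsetSum s fun i hi => ((hX i hi).sub (memLp_const _)).const_mul (a i)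

theorem integral_sum_const_mul_sub_integral {X : ι → Ω → ℝ} {s : Finset ι}
    (hX : ∀ i ∈ s, Integrable (X i) P) (a : ι → ℝ) :
    ∫ ω, ∑ i ∈ s, a i * (X i ω - P[X i]) ∂P = 0 := by
  rw [integral_finsetSum s (f := fun i ω => a i * (X i ω - P[X i]))
    fun i hi => ((hX i hi).sub (integrable_const _)).const_mul (a i)]
  refine Finset.sum_eq_zero fun i hi => ?_
  rw [integral_const_mul, integral_sub (hX i hi) (integrable_const _), integral_const]
  simp

theorem integral_sq_sum_const_mul_sub_integral {X : ι → Ω → ℝ} {s : Finset ι}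
    (hX : ∀ i ∈ s, MemLp (X i) 2 P) (hindep : Set.Pairwise ↑s fun i j => IndepFun (X i) (X j) P)
    (a : ι → ℝ) :
    ∫ ω, (∑ i ∈ s, a i * (X i ω - P[X i])) ^ 2 ∂P = ∑ i ∈ s, a i ^ 2 * Var[X i; P] := by
  have hcentered : ∀ i ∈ s, MemLp (fun ω => X i ω - P[X i]) 2 P :=
    fun i hi => (hX i hi).sub (memLp_const _)
  rw [← variance_of_integral_eq_zero, variance_sum_const_mul_of_pairwise_indepFun hcentered]
  · refine Finset.sum_congr rfl fun i hi => ?_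
    rw [variance_sub_const (hX i hi).aestronglyMeasurable]
  · exact fun i hi j hj hij =>
      (hindep hi hj hij).comp (measurable_sub_const _) (measurable_sub_const _)
  · exact (memLp_sum_const_mul_sub_integral hX a).aemeasurable
  · exact integral_sum_const_mul_sub_integral (fun i hi => (hX i hi).integrable one_le_two) a

theorem integral_sq_add_const_of_integral_eq_zero {Y : Ω → ℝ} (hY : MemLp Y 2 P)
    (hY0 : ∫ ω, Y ω ∂P = 0) (c : ℝ) :
    ∫ ω, (Y ω + c) ^ 2 ∂P = ∫ ω, Y ω ^ 2 ∂P + c ^ 2 := by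
  have hYint : Integrable Y P := hY.integrable one_le_two
  simp_rw [add_sq]
  have hlin : Integrable (fun ω => 2 * Y ω * c) P := (hYint.const_mul 2).mul_const c
  rw [integral_add (hY.integrable_sq.fun_add hlin) (integrable_const _),
    integral_add hY.integrable_sq hlin, integral_mul_const,
    integral_const_mul, hY0, integral_const]
  simp

theorem integral_sum_sq_add_const {κ : Type*} {Y : κ → Ω → ℝ} {t : Finset κ}
    (hY : ∀ j ∈ t, MemLp (Y j) 2 P) (hY0 : ∀ j ∈ t, ∫ ω, Y j ω ∂P = 0) (c : κ → ℝ) :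
    ∫ ω, ∑ j ∈ t, (Y j ω + c j) ^ 2 ∂P = ∫ ω, ∑ j ∈ t, Y j ω ^ 2 ∂P + ∑ j ∈ t, c j ^ 2 := by
  rw [integral_finsetSum t (f := fun j ω => (Y j ω + c j) ^ 2)
      fun j hj => ((hY j hj).add (memLp_const (c j))).integrable_sq,
    integral_finsetSum t (f := fun j ω => Y j ω ^ 2) fun j hj => (hY j hj).integrable_sq,
    ← Finset.sum_add_distrib]
  exact Finset.sum_congr rfl fun j hj =>
    integral_sq_add_const_of_integral_eq_zero (hY j hj) (hY0 j hj) (c j)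

end

theorem mixout_bias_variance_decomposition_general
    {Ω : Type*} [MeasureSpace Ω] [IsProbabilityMeasure (volume : Measure Ω)]
    {n d : ℕ} (A : Matrix (Fin n) (Fin d) ℝ) (b : Fin n → ℝ)
    (L : (Fin d → ℝ) → ℝ)
    (hL : ∀ θ, L θ = (1 / 2) * ∑ j, ((∑ i, A j i * θ i) - b j) ^ 2)
    (M : Ω → Fin d → ℝ) (w u : Fin d → ℝ) (μ σ : ℝ) (hμ : 0 < μ)
    (hMmeas : ∀ i, Measurable fun ω => M ω i)
    (hindep : iIndepFun (m := fun _ => Real.measurableSpace) (fun i ω => M ω i) volume)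
    (hint2 : ∀ i, Integrable (fun ω => (M ω i) ^ 2))
    (hmean : ∀ i, ∫ ω, M ω i = μ)
    (hvar : ∀ i, ∫ ω, (M ω i - μ) ^ 2 = σ ^ 2)
    (Φ : Ω → Fin d → ℝ)
    (hΦ : ∀ ω i, Φ ω i = μ⁻¹ * (M ω i * w i + (1 - M ω i) * u i - (1 - μ) * u i)) :
    (∫ ω, L (Φ ω)) - L w =
        (1 / 2) * ∫ ω, ∑ j, (∑ i, A j i * (Φ ω i - w i)) ^ 2 ∧
      (∫ ω, ∑ j, (∑ i, A j i * (Φ ω i - w i)) ^ 2) =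
        σ ^ 2 / μ ^ 2 * ∑ i, (∑ j, (A j i) ^ 2) * (w i - u i) ^ 2 := by
  have hML2 : ∀ i ∈ univ, MemLp (fun ω => M ω i) 2 :=
    fun i _ => (memLp_two_iff_integrable_sq (hMmeas i).aestronglyMeasurable).2 (hint2 i)
  have hpairwise : Set.Pairwise ↑(univ : Finset (Fin d))
      fun i k => IndepFun (fun ω => M ω i) (fun ω => M ω k) :=
    fun i _ k _ hik => hindep.indepFun hik
  have hMvar : ∀ i, Var[fun ω => M ω i] = σ ^ 2 := fun i => by
    rw [variance_eq_integral (hMmeas i).aemeasurable, hmean, hvar]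
  have hshift : ∀ j ω, ∑ i, A j i * (Φ ω i - w i) =
      ∑ i, A j i * μ⁻¹ * (w i - u i) * (M ω i - ∫ ω', M ω' i) := by
    intro j ω
    refine Finset.sum_congr rfl fun i _ => ?_
    rw [hΦ, hmean]
    field_simp
    ring
  have hYL2 : ∀ j ∈ univ, MemLp (fun ω => ∑ i, A j i * (Φ ω i - w i)) 2 := fun j _ => by
    simpa only [hshift] using memLp_sum_const_mul_sub_integral hML2 _
  have hY0 : ∀ j ∈ univ, ∫ ω, ∑ i, A j i * (Φ ω i - w i) = 0 := fun j _ => by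
    simpa only [hshift] using
      integral_sum_const_mul_sub_integral (fun i hi => (hML2 i hi).integrable one_le_two) _
  have hvariance : ∫ ω, ∑ j, (∑ i, A j i * (Φ ω i - w i)) ^ 2 =
      σ ^ 2 / μ ^ 2 * ∑ i, (∑ j, (A j i) ^ 2) * (w i - u i) ^ 2 := by
    rw [integral_finsetSum _ fun j hj => (hYL2 j hj).integrable_sq]
    simp_rw [hshift, integral_sq_sum_const_mul_sub_integral hML2 hpairwise, hMvar, Finset.sum_mul,
      Finset.mul_sum]
    rw [Finset.sum_comm]
    refine Finset.sum_congr rfl fun i _ => Finset.sum_congr rfl fun j _ => ?_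
    field_simp
  have hLΦ : ∀ ω, L (Φ ω) =
      1 / 2 * ∑ j, ((∑ i, A j i * (Φ ω i - w i)) + (∑ i, A j i * w i - b j)) ^ 2 := by
    intro ω
    simp_rw [hL, mul_sub, Finset.sum_sub_distrib]
    ring_nf
  refine ⟨?_, hvariance⟩
  simp_rw [hLΦ]
  rw [integral_const_mul, integral_sum_sq_add_const hYL2 hY0, hL w]
  ring

/-- bias–variance decomposition for the quadratic loss under mixout. Since
`Φ(w;u,M)` is unbiased, the excess expected loss equals half the variance of `AΦ`:
`E[L(Φ)] − L(w) = (1/2)E[‖A(Φ − w)‖²]`, and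
`E[‖A(Φ − w)‖²] = (σ²/μ²) Σᵢ ‖aᵢ‖²(wᵢ − uᵢ)²` where `aᵢ` are the columns of `A`. -/
theorem mixout_bias_variance_decomposition
    {Ω : Type*} [MeasureSpace Ω] [IsProbabilityMeasure (volume : Measure Ω)]
    {n d : ℕ} (A : Matrix (Fin n) (Fin d) ℝ) (b : Fin n → ℝ)
    (L : (Fin d → ℝ) → ℝ)
    (hL : ∀ θ, L θ = (1 / 2) * ∑ j, ((∑ i, A j i * θ i) - b j) ^ 2)
    (M : Ω → Fin d → ℝ) (w u : Fin d → ℝ) (μ σ : ℝ) (hμ : 0 < μ)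
    (hMmeas : ∀ i, Measurable fun ω => M ω i)
    (hindep : iIndepFun (m := fun _ => Real.measurableSpace) (fun i ω => M ω i) volume)
    (hint : ∀ i, Integrable (fun ω => M ω i))
    (hint2 : ∀ i, Integrable (fun ω => (M ω i) ^ 2))
    (hmean : ∀ i, ∫ ω, M ω i = μ)
    (hvar : ∀ i, ∫ ω, (M ω i - μ) ^ 2 = σ ^ 2)
    (Φ : Ω → Fin d → ℝ)
    (hΦ : ∀ ω i, Φ ω i = μ⁻¹ * (M ω i * w i + (1 - M ω i) * u i - (1 - μ) * u i)) :
    (∫ ω, L (Φ ω)) - L w =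
        (1 / 2) * ∫ ω, ∑ j, (∑ i, A j i * (Φ ω i - w i)) ^ 2 ∧
      (∫ ω, ∑ j, (∑ i, A j i * (Φ ω i - w i)) ^ 2) =
        σ ^ 2 / μ ^ 2 * ∑ i, (∑ j, (A j i) ^ 2) * (w i - u i) ^ 2 :=
  mixout_bias_variance_decomposition_general A b L hL M w u μ σ hμ hMmeas hindep hint2 hmean hvar Φ
    hΦ
end
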